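/- The action of Z/4 on P¹ × P¹ generated by ([z₀:z₁],[w₀:w₁]) ↦ ([iz₀:z₁],[w₀:w₁]) has exactly four fixed points on the curve C defined by z₀⁴(w₀² + w₁²) + z₁⁴(w₀² − w₁²) = 0, namely P₁ = ([0:1],[1:1]), P₂ = ([0:1],[1:−1]), Q₁ = ([1:0],[1:i]), and Q₂ = ([1:0],[1:−i]). -/
import Mathlib


open Complex

/-- Projective equality of nonzero representatives on `ℙ¹`:
`b` is a nonzero scalar multiple of `a`. -/
def projEq (a b : ℂ × ℂ) : Prop :=
  ∃ lam : ℂ, lam ≠ 0 ∧ b = (lam * a.1, lam * a.2)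

/-- The `ℤ/4`-action on `ℙ¹ × ℙ¹` generated by `([z₀:z₁],[w₀:w₁]) ↦ ([iz₀:z₁],[w₀:w₁])`
has exactly four fixed points on the curve `C : z₀⁴(w₀²+w₁²) + z₁⁴(w₀²−w₁²) = 0`,
namely `P₁ = ([0:1],[1:1])`, `P₂ = ([0:1],[1:−1])`, `Q₁ = ([1:0],[1:i])`,
`Q₂ = ([1:0],[1:−i])`. -/
theorem stmt_2 (z₀ z₁ w₀ w₁ : ℂ)
    (hz : (z₀, z₁) ≠ (0, 0)) (hw : (w₀, w₁) ≠ (0, 0))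
    (hC : z₀ ^ 4 * (w₀ ^ 2 + w₁ ^ 2) + z₁ ^ 4 * (w₀ ^ 2 - w₁ ^ 2) = 0) :
    (∃ lam : ℂ, lam ≠ 0 ∧ I * z₀ = lam * z₀ ∧ z₁ = lam * z₁) ↔
      ((projEq (0, 1) (z₀, z₁) ∧ projEq (1, 1) (w₀, w₁)) ∨
       (projEq (0, 1) (z₀, z₁) ∧ projEq (1, -1) (w₀, w₁)) ∨
       (projEq (1, 0) (z₀, z₁) ∧ projEq (1, I) (w₀, w₁)) ∨
       (projEq (1, 0) (z₀, z₁) ∧ projEq (1, -I) (w₀, w₁))) := by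
  constructor
  · rintro ⟨lam, hlam, h1, h2⟩
    by_cases hz0 : z₀ = 0
    · -- z₀ = 0, so z₁ ≠ 0 and w₀² = w₁²
      have hz1 : z₁ ≠ 0 := fun h => hz (by simp [hz0, h])
      have hw2 : (w₀ - w₁) * (w₀ + w₁) = 0 := by
        have h4 : z₁ ^ 4 ≠ 0 := pow_ne_zero _ hz1
        have : z₁ ^ 4 * (w₀ ^ 2 - w₁ ^ 2) = 0 := by
          linear_combination hC - (w₀ ^ 2 + w₁ ^ 2) * (by rw [hz0]; ring :
            z₀ ^ 4 = 0)
        have := (mul_eq_zero.mp this).resolve_left h4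
        linear_combination this
      rcases mul_eq_zero.mp hw2 with h | h
      · have hww : w₁ = w₀ := by linear_combination -h
        have hw0 : w₀ ≠ 0 := fun h0 => hw (by simp [hww, h0])
        exact Or.inl ⟨⟨z₁, hz1, by simp [hz0]⟩, ⟨w₀, hw0, by simp [hww]⟩⟩
      · have hww : w₁ = -w₀ := by linear_combination h
        have hw0 : w₀ ≠ 0 := fun h0 => hw (by simp [hww, h0])
        exact Or.inr (Or.inl ⟨⟨z₁, hz1, by simp [hz0]⟩,
          ⟨w₀, hw0, by simp [hww]⟩⟩)
    · -- z₀ ≠ 0 forces lam = I, then z₁ = 0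
      have hlamI : lam = I := by
        have := mul_right_cancel₀ hz0 (h1.symm)
        exact this
      have hz1 : z₁ = 0 := by
        by_contra hz1
        have h1' : lam = 1 :=
          (mul_right_cancel₀ hz1 (show lam * z₁ = 1 * z₁ by linear_combination -h2))
        rw [hlamI] at h1'
        have : (-1 : ℂ) = 1 := by rw [← I_sq, h1']; ring
        norm_num at this
      have hw2 : (w₁ - I * w₀) * (w₁ + I * w₀) = 0 := by
        have h4 : z₀ ^ 4 ≠ 0 := pow_ne_zero _ hz0
        have : z₀ ^ 4 * (w₀ ^ 2 + w₁ ^ 2) = 0 := by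
          linear_combination hC - (w₀ ^ 2 - w₁ ^ 2) * (by rw [hz1]; ring :
            z₁ ^ 4 = 0)
        have := (mul_eq_zero.mp this).resolve_left h4
        linear_combination this - w₀ ^ 2 * I_sq
      rcases mul_eq_zero.mp hw2 with h | h
      · have hww : w₁ = I * w₀ := by linear_combination h
        have hw0 : w₀ ≠ 0 := fun h0 => hw (by simp [hww, h0])
        exact Or.inr (Or.inr (Or.inl ⟨⟨z₀, hz0, by simp [hz1]⟩,
          ⟨w₀, hw0, by simp [hww]; ring⟩⟩))
      · have hww : w₁ = -(I * w₀) := by linear_combination h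
        have hw0 : w₀ ≠ 0 := fun h0 => hw (by simp [hww, h0])
        exact Or.inr (Or.inr (Or.inr ⟨⟨z₀, hz0, by simp [hz1]⟩,
          ⟨w₀, hw0, by simp [hww]; ring⟩⟩))
  · rintro (⟨⟨l, hl, hzz⟩, _⟩ | ⟨⟨l, hl, hzz⟩, _⟩ | ⟨⟨l, hl, hzz⟩, _⟩ | ⟨⟨l, hl, hzz⟩, _⟩) <;>
      simp only [Prod.mk.injEq] at hzz
    · exact ⟨1, one_ne_zero, by simp [hzz.1], by ring⟩
    · exact ⟨1, one_ne_zero, by simp [hzz.1], by ring⟩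
    · exact ⟨I, I_ne_zero, by ring, by simp [hzz.2]⟩
    · exact ⟨I, I_ne_zero, by ring, by simp [hzz.2]⟩
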